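/- arXiv:2205.03131 — 2 statements merged into one kernel-verified Lean document; each statement's English description precedes it below -/
import Mathlib

section
/- Suppose that the excess loss r(W', Z') is σ-sub-Gaussian when (W', Z') has joint law P_W ⊗ μ, and let ρ := E_{P_W ⊗ μ}[r(W', Z')] > 0. Then for every η with 0 < η < 2ρ/σ², setting a_η := 1 − ησ²/(2ρ) (so 0 < a_η < 1), the expected generalization error satisfies E[ℰ(W, Sₙ)] ≤ ((1 − a_η)/a_η) · E[ℛ̂(W, Sₙ)] + (1/(n η a_η)) Σ_{i=1}^n I(W; Zᵢ). -/
/-!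
The generalization error splits as `E[ℰ] = ρ - E[ℛ̂]` (this needs `ℓ w*` to be `μ`-integrable, which
the integrability of `ℰ + ℛ̂` and the independence of the samples force). For each sample, the
Donsker–Varadhan inequality for the law of `(W, Zᵢ)` against `P_W ⊗ μ`, applied to `-η (r - ρ)`,
together with the sub-Gaussian bound gives `η (ρ - E[r(W, Zᵢ)]) ≤ I(W; Zᵢ) + σ²η²/2`. Averaging over
`i` and using `ηρ - σ²η²/2 = ηρ a_η` rearranges this into the claim.
-/

open MeasureTheory ProbabilityTheory

/-- Real-valued Kullback–Leibler divergence `D(P‖Q) = ∫ log (dP/dQ) dP`. -/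
noncomputable def klDivR {α : Type*} [MeasurableSpace α] (P Q : Measure α) : ℝ :=
  ∫ x, llr P Q x ∂P

open Real

namespace MeasureTheory

variable {α : Type*} [MeasurableSpace α] {ν Q : Measure α}

lemma integrable_exp_sub_llr [IsFiniteMeasure ν] [SigmaFinite Q] (hνQ : ν ≪ Q) {h : α → ℝ}
    (hh : Measurable h) (hexp : Integrable (fun x ↦ exp (h x)) Q) :
    Integrable (fun x ↦ exp (h x - llr ν Q x)) ν := by
  refine (integrable_toReal_rnDeriv_mul_iff hνQ).mp (hexp.mono' ?_ ?_)
  · exact (Measure.measurable_rnDeriv ν Q).ennreal_toReal.aestronglyMeasurable.mul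
      (hh.sub (measurable_llr ν Q)).exp.aestronglyMeasurable
  · refine Filter.Eventually.of_forall fun x ↦ ?_
    rcases (ENNReal.toReal_nonneg (a := ν.rnDeriv Q x)).eq_or_lt with hd | hd
    · simp [← hd, (exp_pos _).le]
    · rw [llr, exp_sub, exp_log hd, Real.norm_eq_abs, abs_of_pos (by positivity),
        mul_div_cancel₀ _ hd.ne']

lemma Integrable.of_integrable_llr [IsFiniteMeasure ν] [SigmaFinite Q] (hνQ : ν ≪ Q)
    (hllr : Integrable (llr ν Q) ν) {g : α → ℝ} (hg : Measurable g)
    (hexp : Integrable (fun x ↦ exp (g x)) Q) (hexp_neg : Integrable (fun x ↦ exp (-g x)) Q) :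
    Integrable g ν := by
  have habs : Integrable (fun x ↦ exp |g x|) Q := by
    simpa using integrable_exp_abs_mul_abs (t := 1) (by simpa using hexp)
      (by simpa using hexp_neg)
  refine (hllr.add (integrable_exp_sub_llr hνQ hg.abs habs)).mono' hg.aestronglyMeasurable ?_
  refine Filter.Eventually.of_forall fun x ↦ ?_
  simp only [Pi.add_apply, Real.norm_eq_abs]
  -- Young's inequality `a ≤ b + exp (a - b)` with `a = |g x|`, `b = llr ν Q x`
  linarith [add_one_le_exp (|g x| - llr ν Q x)]

lemma integral_llr_nonneg [IsProbabilityMeasure ν] [IsProbabilityMeasure Q] (hνQ : ν ≪ Q)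
    (hllr : Integrable (llr ν Q) ν) :
    0 ≤ ∫ x, llr ν Q x ∂ν := by
  simpa using InformationTheory.integral_llr_add_sub_measure_univ_nonneg hνQ hllr

lemma integral_le_integral_llr_add_log_integral_exp [IsProbabilityMeasure ν]
    [IsProbabilityMeasure Q] (hνQ : ν ≪ Q) (hllr : Integrable (llr ν Q) ν) {g : α → ℝ}
    (hg : Integrable g ν) (hexp : Integrable (fun x ↦ exp (g x)) Q) :
    ∫ x, g x ∂ν ≤ ∫ x, llr ν Q x ∂ν + log (∫ x, exp (g x) ∂Q) := by
  have := isProbabilityMeasure_tilted hexp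
  have hνtilted : ν ≪ Q.tilted g := hνQ.trans (absolutelyContinuous_tilted hexp)
  have := integral_llr_nonneg hνtilted (integrable_llr_tilted_right hνQ hg hllr hexp)
  rw [integral_llr_tilted_right hνQ hg hexp hllr] at this
  linarith

lemma Integrable.of_integrable_llr_of_integrable_exp_mul_sub [IsFiniteMeasure ν]
    [SigmaFinite Q] (hνQ : ν ≪ Q) (hllr : Integrable (llr ν Q) ν) {X : α → ℝ} (hX : Measurable X)
    {m : ℝ} (hmgf : ∀ t : ℝ, Integrable (fun x ↦ exp (t * (X x - m))) Q) :
    Integrable X ν := by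
  have hXm := Integrable.of_integrable_llr hνQ hllr (hX.sub measurable_const)
    (by simpa using hmgf 1) (by simpa using hmgf (-1))
  simpa using hXm.add (integrable_const m)

lemma mul_integral_sub_le_integral_llr_add_of_subGaussian [IsProbabilityMeasure ν]
    [IsProbabilityMeasure Q] (hνQ : ν ≪ Q) (hllr : Integrable (llr ν Q) ν) {X : α → ℝ}
    (hX : Measurable X) {m σ : ℝ} (hmgf : ∀ t : ℝ, Integrable (fun x ↦ exp (t * (X x - m))) Q)
    (hsubG : ∀ t : ℝ, log (∫ x, exp (t * (X x - m)) ∂Q) ≤ σ ^ 2 * t ^ 2 / 2) (t : ℝ) :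
    t * (∫ x, X x ∂ν - m) ≤ ∫ x, llr ν Q x ∂ν + σ ^ 2 * t ^ 2 / 2 := by
  have hXν := Integrable.of_integrable_llr_of_integrable_exp_mul_sub hνQ hllr hX hmgf
  have hdv := integral_le_integral_llr_add_log_integral_exp hνQ hllr
    (g := fun x ↦ t * (X x - m)) ((hXν.sub (integrable_const m)).const_mul t) (hmgf t)
  rw [integral_const_mul, integral_sub hXν (integrable_const m), integral_const,
    probReal_univ, one_smul] at hdv
  linarith [hsubG t]

end MeasureTheory

namespace ProbabilityTheory

variable {Ω : Type*} [MeasurableSpace Ω] {P : Measure Ω} [IsProbabilityMeasure P]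

lemma IndepFun.integrable_right_of_integrable_add {X Y : Ω → ℝ} (hX : Measurable X)
    (hY : Measurable Y) (hXY : IndepFun X Y P) (hsum : Integrable (X + Y) P) :
    Integrable Y P := by
  have := Measure.isProbabilityMeasure_map (μ := P) hX.aemeasurable
  have := Measure.isProbabilityMeasure_map (μ := P) hY.aemeasurable
  have hprod : Integrable (fun p : ℝ × ℝ ↦ p.1 + p.2) ((P.map X).prod (P.map Y)) := by
    rw [← (indepFun_iff_map_prod_eq_prod_map_map hX.aemeasurable hY.aemeasurable).mp hXY,
      integrable_map_measure (by fun_prop) (hX.aemeasurable.prodMk hY.aemeasurable)]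
    exact hsum
  obtain ⟨x, hx⟩ := hprod.prod_right_ae.exists
  have hid : Integrable id (P.map Y) := (hx.sub (integrable_const x)).congr
    (Filter.Eventually.of_forall fun y ↦ by simp)
  exact hid.comp_measurable hY

lemma iIndepFun.integrable_of_integrable_sum {ι : Type*} [Fintype ι]
    {X : ι → Ω → ℝ} (hX : ∀ i, Measurable (X i)) (hindep : iIndepFun X P)
    (hsum : Integrable (∑ i, X i) P) (i : ι) :
    Integrable (X i) P := by
  classical
  have hsplit : ∑ j, X j = ∑ j ∈ Finset.univ.erase i, X j + X i :=
    (Finset.sum_erase_add _ _ (Finset.mem_univ i)).symm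
  exact IndepFun.integrable_right_of_integrable_add
    (by simpa only [← Finset.sum_apply] using Finset.measurable_sum _ fun j _ ↦ hX j) (hX i)
    (hindep.indepFun_finsetSum_of_notMem hX (Finset.notMem_erase i _)) (hsplit ▸ hsum)

end ProbabilityTheory

section SampleMean

variable {Ω 𝒲 𝒵 : Type*} [MeasurableSpace Ω] [MeasurableSpace 𝒲] [MeasurableSpace 𝒵]
  {P : Measure Ω} {μ : Measure 𝒵} {n : ℕ} {Z : Fin n → Ω → 𝒵} {W : Ω → 𝒲}
  {f : 𝒲 → 𝒵 → ℝ} {c : 𝒵 → ℝ}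

lemma integrable_sampleMean (hZ : ∀ i, Measurable (Z i)) (hZlaw : ∀ i, P.map (Z i) = μ)
    (hc : Integrable c μ) :
    Integrable (fun ω ↦ (n : ℝ)⁻¹ * ∑ i, c (Z i ω)) P :=
  (integrable_finsetSum _ fun i _ ↦ (hZlaw i ▸ hc).comp_measurable (hZ i)).const_mul _

lemma integral_sampleMean (hn : 0 < n) (hZ : ∀ i, Measurable (Z i))
    (hZlaw : ∀ i, P.map (Z i) = μ) (hc : Integrable c μ) :
    ∫ ω, (n : ℝ)⁻¹ * ∑ i, c (Z i ω) ∂P = ∫ z, c z ∂μ := by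
  have hcZ i : ∫ ω, c (Z i ω) ∂P = ∫ z, c z ∂μ := by
    rw [← hZlaw i, integral_map (hZ i).aemeasurable (hZlaw i ▸ hc.aestronglyMeasurable)]
  rw [integral_const_mul, integral_finsetSum _ fun i _ ↦ (hZlaw i ▸ hc).comp_measurable (hZ i)]
  simp only [hcZ, Finset.sum_const, Finset.card_univ, Fintype.card_fin, nsmul_eq_mul]
  field_simp

variable [IsProbabilityMeasure P] [IsProbabilityMeasure μ]

lemma integrable_of_integrable_integral_sub_sampleMean (hn : 0 < n) (hc : Measurable c)
    (hZ : ∀ i, Measurable (Z i)) (hZlaw : ∀ i, P.map (Z i) = μ) (hindep : iIndepFun Z P)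
    (hW : Measurable W)
    (hfc : Integrable (fun p : 𝒲 × 𝒵 ↦ f p.1 p.2 - c p.2) ((P.map W).prod μ))
    (hint : Integrable (fun ω ↦ ∫ z, f (W ω) z ∂μ - (n : ℝ)⁻¹ * ∑ i, c (Z i ω)) P) :
    Integrable c μ := by
  by_contra hcμ
  -- `f w - c` is integrable for a.e. `w`, so `f w` is not, and `∫ z, f (W ω) z ∂μ` is a junk `0`
  have hfW : ∀ᵐ ω ∂P, ∫ z, f (W ω) z ∂μ = 0 := by
    filter_upwards [ae_of_ae_map hW.aemeasurable hfc.prod_right_ae] with ω hω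
    refine integral_undef fun hfω ↦ hcμ ?_
    exact (hfω.sub hω).congr (Filter.Eventually.of_forall fun z ↦ by simp)
  have hsum : Integrable (∑ i, fun ω ↦ c (Z i ω)) P := by
    refine (hint.const_mul (-n)).congr ?_
    filter_upwards [hfW] with ω hω
    simp only [hω, Finset.sum_apply, zero_sub]
    field_simp
  have hcZ := (hindep.comp (fun _ ↦ c) fun _ ↦ hc).integrable_of_integrable_sum
    (fun i ↦ hc.comp (hZ i)) hsum ⟨0, hn⟩
  exact hcμ (hZlaw ⟨0, hn⟩ ▸
    (integrable_map_measure hc.aestronglyMeasurable (hZ _).aemeasurable).mpr hcZ)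

lemma integral_integral_sub_sampleMean (hn : 0 < n)
    (hZ : ∀ i, Measurable (Z i)) (hZlaw : ∀ i, P.map (Z i) = μ) (hW : Measurable W)
    (hfc : Integrable (fun p : 𝒲 × 𝒵 ↦ f p.1 p.2 - c p.2) ((P.map W).prod μ))
    (hc : Integrable c μ) :
    ∫ ω, (∫ z, f (W ω) z ∂μ - (n : ℝ)⁻¹ * ∑ i, c (Z i ω)) ∂P
      = ∫ p, (f p.1 p.2 - c p.2) ∂((P.map W).prod μ) := by
  have hg : Integrable (fun w ↦ ∫ z, (f w z - c z) ∂μ) (P.map W) := hfc.integral_prod_left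
  have hgW : Integrable (fun ω ↦ ∫ z, (f (W ω) z - c z) ∂μ) P :=
    hg.comp_aemeasurable hW.aemeasurable
  have hfW : (fun ω ↦ ∫ z, f (W ω) z ∂μ)
      =ᵐ[P] fun ω ↦ ∫ z, (f (W ω) z - c z) ∂μ + ∫ z, c z ∂μ := by
    filter_upwards [ae_of_ae_map hW.aemeasurable hfc.prod_right_ae] with ω hω
    rw [← integral_add hω hc]
    simp
  calc ∫ ω, (∫ z, f (W ω) z ∂μ - (n : ℝ)⁻¹ * ∑ i, c (Z i ω)) ∂P
      = ∫ ω, (∫ z, (f (W ω) z - c z) ∂μ + ∫ z, c z ∂μ - (n : ℝ)⁻¹ * ∑ i, c (Z i ω)) ∂P :=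
        integral_congr_ae (hfW.sub Filter.EventuallyEq.rfl)
    _ = ∫ ω, ∫ z, (f (W ω) z - c z) ∂μ ∂P := by
        rw [integral_sub ?_ (integrable_sampleMean hZ hZlaw hc),
          integral_add hgW (integrable_const _), integral_sampleMean hn hZ hZlaw hc]
        · simp
        · exact hgW.add (integrable_const _)
    _ = ∫ p, (f p.1 p.2 - c p.2) ∂((P.map W).prod μ) := by
        rw [integral_prod _ hfc, integral_map hW.aemeasurable hg.aestronglyMeasurable]

end SampleMean

lemma sub_average_le_of_forall_le {n : ℕ} (hn : 0 < n) {ρ σ η a : ℝ} (hσ : 0 < σ) (hρ : 0 < ρ)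
    (hη : 0 < η) (hη2 : η < 2 * ρ / σ ^ 2) (ha : a = 1 - η * σ ^ 2 / (2 * ρ))
    {x k : Fin n → ℝ} (hxk : ∀ i, -η * (x i - ρ) ≤ k i + σ ^ 2 * η ^ 2 / 2) :
    ρ - (n : ℝ)⁻¹ * ∑ i, x i
      ≤ (1 - a) / a * ((n : ℝ)⁻¹ * ∑ i, x i) + 1 / (n * η * a) * ∑ i, k i := by
  have ha_pos : 0 < a := by
    rw [ha, sub_pos, div_lt_one (by positivity)]
    rwa [lt_div_iff₀ (by positivity)] at hη2
  have hsum : n * (η * ρ - σ ^ 2 * η ^ 2 / 2) ≤ ∑ i, k i + η * ∑ i, x i := by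
    have := Finset.sum_le_sum fun i (_ : i ∈ Finset.univ) ↦ hxk i
    simp only [Finset.sum_add_distrib, ← Finset.mul_sum, Finset.sum_sub_distrib,
      Finset.sum_const, Finset.card_univ, Fintype.card_fin, nsmul_eq_mul] at this
    linarith
  have hρa : η * ρ - σ ^ 2 * η ^ 2 / 2 = η * ρ * a := by
    rw [ha]; field_simp
  have hn' : (0 : ℝ) < n := by exact_mod_cast hn
  have hdiff : (1 - a) / a * ((n : ℝ)⁻¹ * ∑ i, x i) + 1 / (n * η * a) * ∑ i, k i
      - (ρ - (n : ℝ)⁻¹ * ∑ i, x i)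
      = (∑ i, k i + η * ∑ i, x i - n * (η * ρ * a)) / (n * η * a) := by
    field_simp
    ring
  rw [← sub_nonneg, hdiff]
  exact div_nonneg (sub_nonneg.mpr (hρa ▸ hsum)) (by positivity)

theorem subGaussian_fast_rate_generalization_bound_general
    {Ω 𝒲 𝒵 : Type*} [MeasurableSpace Ω] [MeasurableSpace 𝒲] [MeasurableSpace 𝒵]
    (P : Measure Ω) [IsProbabilityMeasure P]
    (μ : Measure 𝒵) [IsProbabilityMeasure μ]
    (ℓ : 𝒲 → 𝒵 → ℝ) (hℓ : Measurable (Function.uncurry ℓ))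
    (n : ℕ) (hn : 0 < n)
    (Z : Fin n → Ω → 𝒵) (hZmeas : ∀ i, Measurable (Z i))
    (hZlaw : ∀ i, P.map (Z i) = μ)
    (hindep : iIndepFun Z P)
    (W : Ω → 𝒲) (hW : Measurable W)
    (wstar : 𝒲)
    (r : 𝒲 → 𝒵 → ℝ) (hr : r = fun w z => ℓ w z - ℓ wstar z)
    (σ : ℝ) (hσ : 0 < σ)
    -- the expected excess risk under `P_W ⊗ μ` is positive
    (ρ : ℝ) (hρ : ρ = ∫ q, r q.1 q.2 ∂((P.map W).prod μ)) (hρpos : 0 < ρ)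
    -- the excess loss is integrable and `σ`-sub-Gaussian under `P_W ⊗ μ`
    (hrInt : Integrable (fun p : 𝒲 × 𝒵 => r p.1 p.2) ((P.map W).prod μ))
    (hMGF : ∀ η : ℝ, Integrable
      (fun p : 𝒲 × 𝒵 => Real.exp (η * (r p.1 p.2 - ρ))) ((P.map W).prod μ))
    (hsubG : ∀ η : ℝ,
      Real.log (∫ p, Real.exp (η * (r p.1 p.2 - ρ)) ∂((P.map W).prod μ)) ≤ σ ^ 2 * η ^ 2 / 2)
    -- all expectations appearing are finite
    (hgenInt : Integrable
      (fun ω => (∫ z, ℓ (W ω) z ∂μ) - (n : ℝ)⁻¹ * ∑ i, ℓ (W ω) (Z i ω)) P)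
    (hEmpInt : Integrable (fun ω => (n : ℝ)⁻¹ * ∑ i, r (W ω) (Z i ω)) P)
    (hac : ∀ i, P.map (fun ω => (W ω, Z i ω)) ≪ (P.map W).prod μ)
    (hllr : ∀ i, Integrable (llr (P.map (fun ω => (W ω, Z i ω))) ((P.map W).prod μ))
        (P.map (fun ω => (W ω, Z i ω)))) :
    ∀ η aη : ℝ, 0 < η → η < 2 * ρ / σ ^ 2 → aη = 1 - η * σ ^ 2 / (2 * ρ) →
    ∫ ω, ((∫ z, ℓ (W ω) z ∂μ) - (n : ℝ)⁻¹ * ∑ i, ℓ (W ω) (Z i ω)) ∂P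
      ≤ (1 - aη) / aη * (∫ ω, (n : ℝ)⁻¹ * ∑ i, r (W ω) (Z i ω) ∂P)
        + (1 / (n * η * aη)) * ∑ i,
            klDivR (P.map (fun ω => (W ω, Z i ω))) ((P.map W).prod μ) := by
  intro η aη hη hη2 haη
  subst hr
  have := Measure.isProbabilityMeasure_map (μ := P) hW.aemeasurable
  have hℓstar : Measurable (ℓ wstar) := hℓ.comp (measurable_const.prodMk measurable_id)
  have hrm : Measurable fun p : 𝒲 × 𝒵 ↦ ℓ p.1 p.2 - ℓ wstar p.2 :=
    hℓ.sub (hℓstar.comp measurable_snd)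
  have hsplit : (fun ω ↦ (∫ z, ℓ (W ω) z ∂μ - (n : ℝ)⁻¹ * ∑ i, ℓ (W ω) (Z i ω))
        + (n : ℝ)⁻¹ * ∑ i, (ℓ (W ω) (Z i ω) - ℓ wstar (Z i ω)))
      = fun ω ↦ ∫ z, ℓ (W ω) z ∂μ - (n : ℝ)⁻¹ * ∑ i, ℓ wstar (Z i ω) := by
    funext ω
    rw [Finset.sum_sub_distrib]
    ring
  have hℓstar_int : Integrable (ℓ wstar) μ :=
    integrable_of_integrable_integral_sub_sampleMean hn hℓstar hZmeas hZlaw hindep hW hrInt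
      (hsplit ▸ hgenInt.add hEmpInt)
  have hgen : ∫ ω, (∫ z, ℓ (W ω) z ∂μ - (n : ℝ)⁻¹ * ∑ i, ℓ (W ω) (Z i ω)) ∂P
      = ρ - ∫ ω, (n : ℝ)⁻¹ * ∑ i, (ℓ (W ω) (Z i ω) - ℓ wstar (Z i ω)) ∂P := by
    rw [eq_sub_iff_add_eq, ← integral_add hgenInt hEmpInt, hsplit,
      integral_integral_sub_sampleMean hn hZmeas hZlaw hW hrInt hℓstar_int, hρ]
  have hpair i : AEMeasurable (fun ω ↦ (W ω, Z i ω)) P := (hW.prodMk (hZmeas i)).aemeasurable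
  have hrP i : Integrable (fun ω ↦ ℓ (W ω) (Z i ω) - ℓ wstar (Z i ω)) P := by
    have := Measure.isProbabilityMeasure_map (hpair i)
    exact (integrable_map_measure hrm.aestronglyMeasurable (hpair i)).mp
      (Integrable.of_integrable_llr_of_integrable_exp_mul_sub (hac i) (hllr i) hrm hMGF)
  have hbound i : -η * (∫ ω, (ℓ (W ω) (Z i ω) - ℓ wstar (Z i ω)) ∂P - ρ)
      ≤ klDivR (P.map fun ω ↦ (W ω, Z i ω)) ((P.map W).prod μ) + σ ^ 2 * η ^ 2 / 2 := by
    have := Measure.isProbabilityMeasure_map (hpair i)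
    have := mul_integral_sub_le_integral_llr_add_of_subGaussian (hac i) (hllr i) hrm hMGF
      hsubG (-η)
    rwa [integral_map (hpair i) hrm.aestronglyMeasurable, neg_sq] at this
  rw [hgen, integral_const_mul, integral_finsetSum _ fun i _ ↦ hrP i]
  exact sub_average_le_of_forall_le hn hσ hρpos hη hη2 haη hbound

/-- **Theorem 3 (fast rate with sub-Gaussian condition, generalization error).** -/
theorem subGaussian_fast_rate_generalization_bound
    {Ω 𝒲 𝒵 : Type*} [MeasurableSpace Ω] [MeasurableSpace 𝒲] [MeasurableSpace 𝒵]
    (P : Measure Ω) [IsProbabilityMeasure P]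
    (μ : Measure 𝒵) [IsProbabilityMeasure μ]
    (ℓ : 𝒲 → 𝒵 → ℝ) (hℓ : Measurable (Function.uncurry ℓ))
    (n : ℕ) (hn : 0 < n)
    (Z : Fin n → Ω → 𝒵) (hZmeas : ∀ i, Measurable (Z i))
    (hZlaw : ∀ i, P.map (Z i) = μ)
    (hindep : iIndepFun Z P)
    (W : Ω → 𝒲) (hW : Measurable W)
    (wstar : 𝒲) (hwstar : ∀ w, ∫ z, ℓ wstar z ∂μ ≤ ∫ z, ℓ w z ∂μ)
    (r : 𝒲 → 𝒵 → ℝ) (hr : r = fun w z => ℓ w z - ℓ wstar z)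
    (σ : ℝ) (hσ : 0 < σ)
    -- the expected excess risk under `P_W ⊗ μ` is positive
    (ρ : ℝ) (hρ : ρ = ∫ q, r q.1 q.2 ∂((P.map W).prod μ)) (hρpos : 0 < ρ)
    -- the excess loss is integrable and `σ`-sub-Gaussian under `P_W ⊗ μ`
    (hrInt : Integrable (fun p : 𝒲 × 𝒵 => r p.1 p.2) ((P.map W).prod μ))
    (hMGF : ∀ η : ℝ, Integrable
      (fun p : 𝒲 × 𝒵 => Real.exp (η * (r p.1 p.2 - ρ))) ((P.map W).prod μ))
    (hsubG : ∀ η : ℝ,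
      Real.log (∫ p, Real.exp (η * (r p.1 p.2 - ρ)) ∂((P.map W).prod μ)) ≤ σ ^ 2 * η ^ 2 / 2)
    -- all expectations appearing are finite
    (hgenInt : Integrable
      (fun ω => (∫ z, ℓ (W ω) z ∂μ) - (n : ℝ)⁻¹ * ∑ i, ℓ (W ω) (Z i ω)) P)
    (hEmpInt : Integrable (fun ω => (n : ℝ)⁻¹ * ∑ i, r (W ω) (Z i ω)) P)
    (hac : ∀ i, P.map (fun ω => (W ω, Z i ω)) ≪ (P.map W).prod μ)
    (hllr : ∀ i, Integrable (llr (P.map (fun ω => (W ω, Z i ω))) ((P.map W).prod μ))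
        (P.map (fun ω => (W ω, Z i ω)))) :
    ∀ η aη : ℝ, 0 < η → η < 2 * ρ / σ ^ 2 → aη = 1 - η * σ ^ 2 / (2 * ρ) →
    ∫ ω, ((∫ z, ℓ (W ω) z ∂μ) - (n : ℝ)⁻¹ * ∑ i, ℓ (W ω) (Z i ω)) ∂P
      ≤ (1 - aη) / aη * (∫ ω, (n : ℝ)⁻¹ * ∑ i, r (W ω) (Z i ω) ∂P)
        + (1 / (n * η * aη)) * ∑ i,
            klDivR (P.map (fun ω => (W ω, Z i ω))) ((P.map W).prod μ) :=
  subGaussian_fast_rate_generalization_bound_general P μ ℓ hℓ n hn Z hZmeas hZlaw hindep W hW wstar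
    r hr σ hσ ρ hρ hρpos hrInt hMGF hsubG hgenInt hEmpInt hac hllr
end

section
/- Assume the learning tuple satisfies the expected (η, c)-central condition for some η > 0 and 0 < c ≤ 1, i.e. log E_{P_W ⊗ μ}[exp(−η r(W', Z'))] ≤ −c η E_{P_W ⊗ μ}[r(W', Z')]. Then for every η' ∈ (0, η], the expected generalization error satisfies E[ℰ(W, Sₙ)] ≤ ((1 − c)/c) · E[ℛ̂(W, Sₙ)] + (1/(c η' n)) Σ_{i=1}^n I(W; Zᵢ). -/
/-!
Donsker–Varadhan for the joint law of `(W, Z i)` against `P_W ⊗ μ`, with test function `-η r`,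
combined with the central condition gives `c η E_{P_W ⊗ μ}[r] ≤ η E[r(W, Z i)] + I(W; Z i)` for
every `i`. Averaging over `i` and writing the expected generalization error as
`E_{P_W ⊗ μ}[r] - (1/n) ∑ i, E[r(W, Z i)]` gives the bound at `η`; since `I(W; Z i) ≥ 0`, it
persists for every `η' ≤ η`. The integrability of each `r(W, Z i)` comes from the finiteness of
the mutual informations through the Fenchel–Young inequality `a b ≤ eᵃ + b log b - b`.
-/

open MeasureTheory ProbabilityTheory

open InformationTheory Real

lemma Real.mul_le_exp_add_mul_log_sub {a b : ℝ} (hb : 0 ≤ b) :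
    a * b ≤ exp a + b * log b - b := by
  rcases hb.eq_or_lt with rfl | hb
  · simpa using (exp_pos a).le
  · have h := mul_le_mul_of_nonneg_left (add_one_le_exp (a - log b)) hb.le
    rw [exp_sub, exp_log hb, mul_div_cancel₀ _ hb.ne'] at h
    linarith

section KullbackLeibler

variable {α : Type*} [MeasurableSpace α] {ν Q : Measure α}

lemma integrable_max_zero_of_integrable_exp [SigmaFinite ν] [IsFiniteMeasure Q] (hac : ν ≪ Q)
    (hllr : Integrable (llr ν Q) ν) {g : α → ℝ} (hg : Measurable g)
    (hexp : Integrable (fun x => exp (g x)) Q) :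
    Integrable (fun x => max (g x) 0) ν := by
  rw [← integrable_toReal_rnDeriv_mul_iff hac]
  have hbound := (hexp.add (integrable_const 1)).add ((integrable_rnDeriv_mul_log_iff hac).mpr hllr)
  refine hbound.mono' (by fun_prop) (Filter.Eventually.of_forall fun x => ?_)
  set ρ := (ν.rnDeriv Q x).toReal
  have hρ : 0 ≤ ρ := ENNReal.toReal_nonneg
  have hfenchel := mul_le_exp_add_mul_log_sub (a := max (g x) 0) hρ
  have hexp_max : exp (max (g x) 0) ≤ exp (g x) + 1 := by
    rcases le_total (g x) 0 with h | h <;> simp [h, (exp_pos (g x)).le]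
  simp only [Pi.add_apply]
  rw [norm_of_nonneg (by positivity)]
  linarith

lemma klDivR_nonneg [IsProbabilityMeasure ν] [IsProbabilityMeasure Q] (hac : ν ≪ Q)
    (hllr : Integrable (llr ν Q) ν) : 0 ≤ klDivR ν Q := by
  simpa [klDivR] using integral_llr_add_sub_measure_univ_nonneg hac hllr

/-- The Donsker–Varadhan inequality: Gibbs' inequality for `ν` against the tilted measure
`Q.tilted g`. -/
lemma integral_le_klDivR_add_log_integral_exp [IsProbabilityMeasure ν] [IsProbabilityMeasure Q]
    (hac : ν ≪ Q) (hllr : Integrable (llr ν Q) ν) {g : α → ℝ} (hg : Integrable g ν)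
    (hexp : Integrable (fun x => exp (g x)) Q) :
    ∫ x, g x ∂ν ≤ klDivR ν Q + log (∫ x, exp (g x) ∂Q) := by
  have : IsProbabilityMeasure (Q.tilted g) := isProbabilityMeasure_tilted hexp
  have h := klDivR_nonneg (hac.trans (absolutelyContinuous_tilted hexp))
    (integrable_llr_tilted_right hac hg hllr hexp)
  rw [klDivR, integral_llr_tilted_right hac hg hexp hllr] at h
  rw [klDivR]
  linarith

end KullbackLeibler

lemma abs_le_abs_sum_add_sum_max_neg {ι : Type*} [Fintype ι] (x : ι → ℝ) (i : ι) :
    |x i| ≤ |∑ j, x j| + ∑ j, max (-x j) 0 := by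
  have hneg : max (-x i) 0 ≤ ∑ j, max (-x j) 0 :=
    Finset.single_le_sum (f := fun j => max (-x j) 0) (fun j _ => le_max_right _ _)
      (Finset.mem_univ i)
  have hshift : x i + max (-x i) 0 ≤ ∑ j, (x j + max (-x j) 0) :=
    Finset.single_le_sum (f := fun j => x j + max (-x j) 0)
      (fun j _ => by linarith [le_max_left (-x j) 0]) (Finset.mem_univ i)
  rw [Finset.sum_add_distrib] at hshift
  rw [abs_le]
  constructor <;> linarith [le_abs_self (∑ j, x j), abs_nonneg (∑ j, x j), le_max_left (-x i) 0,
    le_max_right (-x i) 0]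

section Integrability

variable {Ω : Type*} [MeasurableSpace Ω] {P : Measure Ω}

lemma integrable_of_integrable_sum_of_integrable_max_neg {ι : Type*} [Fintype ι]
    {X : ι → Ω → ℝ} (hX : ∀ i, AEStronglyMeasurable (X i) P)
    (hsum : Integrable (fun ω => ∑ i, X i ω) P)
    (hneg : ∀ i, Integrable (fun ω => max (-X i ω) 0) P) (i : ι) : Integrable (X i) P :=
  (hsum.abs.add (integrable_finsetSum _ fun j _ => hneg j)).mono' (hX i)
    (Filter.Eventually.of_forall fun ω => abs_le_abs_sum_add_sum_max_neg (fun j => X j ω) i)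

/-- Fubini: `|X + Y|` is integrable against the law of `X` times the law of `Y`, so `|x + Y|` is
integrable for some `x`. -/
lemma ProbabilityTheory.IndepFun.integrable_right_of_integrable_add_s6 [IsProbabilityMeasure P]
    {X Y : Ω → ℝ} (hX : Measurable X) (hY : Measurable Y) (hXY : IndepFun X Y P)
    (h : Integrable (X + Y) P) : Integrable Y P := by
  have hlaw := (indepFun_iff_map_prod_eq_prod_map_map hX.aemeasurable hY.aemeasurable).mp hXY
  have hprod : Integrable (fun q : ℝ × ℝ => q.1 + q.2) ((P.map X).prod (P.map Y)) := by
    rw [← hlaw, integrable_map_measure (by fun_prop) (hX.prodMk hY).aemeasurable]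
    exact h
  have : IsProbabilityMeasure (P.map X) := Measure.isProbabilityMeasure_map hX.aemeasurable
  obtain ⟨x, hx⟩ := hprod.prod_right_ae.exists
  have hid : Integrable id (P.map Y) := (hx.sub (integrable_const x)).congr
    (Filter.Eventually.of_forall fun y => by simp)
  exact hid.comp_measurable hY

lemma ProbabilityTheory.iIndepFun.integrable_of_integrable_sum_s6 [IsProbabilityMeasure P]
    {ι : Type*} [Fintype ι] {X : ι → Ω → ℝ} (hX : ∀ i, Measurable (X i)) (hind : iIndepFun X P)
    (h : Integrable (fun ω => ∑ i, X i ω) P) (i : ι) : Integrable (X i) P := by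
  classical
  have hsplit : (fun ω => ∑ i, X i ω) = (∑ j ∈ Finset.univ.erase i, X j) + X i := by
    ext ω
    simp [Finset.sum_apply]
  rw [hsplit] at h
  have hrest : Measurable (∑ j ∈ Finset.univ.erase i, X j) := by
    simpa only [← Finset.sum_apply] using Finset.measurable_sum _ fun j _ => hX j
  have hindep_rest := hind.indepFun_finsetSum_of_notMem hX (Finset.notMem_erase i Finset.univ)
  exact hindep_rest.integrable_right_of_integrable_add_s6 hrest (hX i) h

end Integrability

lemma sub_average_le_of_forall_le_s6 {n : ℕ} (hn : 0 < n) {η η' c m : ℝ} {s T : Fin n → ℝ}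
    (hη' : 0 < η') (hη'η : η' ≤ η) (hc : 0 < c) (hT : ∀ i, 0 ≤ T i)
    (h : ∀ i, c * η * m ≤ η * s i + T i) :
    m - (n : ℝ)⁻¹ * ∑ i, s i
      ≤ (1 - c) / c * ((n : ℝ)⁻¹ * ∑ i, s i) + 1 / (c * η' * n) * ∑ i, T i := by
  have hn' : (0 : ℝ) < n := Nat.cast_pos.mpr hn
  have hη : 0 < η := hη'.trans_le hη'η
  have hsum : n * (c * η * m) ≤ η * ∑ i, s i + ∑ i, T i := by
    simpa [Finset.sum_add_distrib, Finset.mul_sum] using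
      Finset.sum_le_sum (s := Finset.univ) fun i _ => h i
  have hbound : m - (n : ℝ)⁻¹ * ∑ i, s i
      ≤ (1 - c) / c * ((n : ℝ)⁻¹ * ∑ i, s i) + 1 / (c * η * n) * ∑ i, T i := by
    rw [← sub_nonneg]
    have hrw : (1 - c) / c * ((n : ℝ)⁻¹ * ∑ i, s i) + 1 / (c * η * n) * ∑ i, T i
        - (m - (n : ℝ)⁻¹ * ∑ i, s i)
        = (η * ∑ i, s i + ∑ i, T i - n * (c * η * m)) / (c * η * n) := by
      field_simp
      ring
    rw [hrw]
    exact div_nonneg (by linarith) (by positivity)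
  have hrate : 1 / (c * η * n) * ∑ i, T i ≤ 1 / (c * η' * n) * ∑ i, T i := by
    gcongr
    exact Finset.sum_nonneg fun i _ => hT i
  linarith

section Learning

variable {Ω 𝒲 𝒵 : Type*} [MeasurableSpace Ω] [MeasurableSpace 𝒲] [MeasurableSpace 𝒵]
  {P : Measure Ω} [IsProbabilityMeasure P]

lemma integrable_max_neg_comp_of_integrable_exp {α : Type*} [MeasurableSpace α] {Q : Measure α}
    [IsFiniteMeasure Q] {V : Ω → α} (hV : Measurable V) (hac : P.map V ≪ Q)
    (hllr : Integrable (llr (P.map V) Q) (P.map V)) {f : α → ℝ} (hf : Measurable f) {η : ℝ}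
    (hη : 0 < η) (hexp : Integrable (fun x => exp (-η * f x)) Q) :
    Integrable (fun ω => max (-f (V ω)) 0) P := by
  have : IsProbabilityMeasure (P.map V) := Measure.isProbabilityMeasure_map hV.aemeasurable
  have h := (integrable_max_zero_of_integrable_exp hac hllr (hf.const_mul (-η)) hexp).const_mul η⁻¹
  have hν : Integrable (fun x => max (-f x) 0) (P.map V) :=
    h.congr (Filter.Eventually.of_forall fun x => by
      dsimp only
      rw [mul_max_of_nonneg _ _ (inv_nonneg.mpr hη.le), mul_zero, neg_mul, mul_neg,
        inv_mul_cancel_left₀ hη.ne'])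
  exact hν.comp_measurable hV

lemma mul_integral_le_integral_comp_add_klDivR {α : Type*} [MeasurableSpace α] {Q : Measure α}
    [IsProbabilityMeasure Q] {V : Ω → α} (hV : Measurable V) (hac : P.map V ≪ Q)
    (hllr : Integrable (llr (P.map V) Q) (P.map V)) {f : α → ℝ} (hf : Measurable f)
    (hfV : Integrable (fun ω => f (V ω)) P) {η c : ℝ}
    (hexp : Integrable (fun x => exp (-η * f x)) Q)
    (hcentral : log (∫ x, exp (-η * f x) ∂Q) ≤ -c * η * ∫ x, f x ∂Q) :
    c * η * ∫ x, f x ∂Q ≤ η * ∫ ω, f (V ω) ∂P + klDivR (P.map V) Q := by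
  have : IsProbabilityMeasure (P.map V) := Measure.isProbabilityMeasure_map hV.aemeasurable
  have hfν : Integrable f (P.map V) :=
    (integrable_map_measure hf.aestronglyMeasurable hV.aemeasurable).mpr hfV
  have h := integral_le_klDivR_add_log_integral_exp hac hllr (hfν.const_mul (-η)) hexp
  rw [integral_const_mul, integral_map hV.aemeasurable hf.aestronglyMeasurable] at h
  linarith

variable {μ : Measure 𝒵} {n : ℕ} {Z : Fin n → Ω → 𝒵} {W : Ω → 𝒲} {ℓ r : 𝒲 → 𝒵 → ℝ}
  {ℓ₀ : 𝒵 → ℝ}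

lemma integral_generalization_error_eq [SFinite μ] (hn : 0 < n)
    (hW : Measurable W) (hZ : ∀ i, Measurable (Z i)) (hZlaw : ∀ i, P.map (Z i) = μ)
    (hℓ : ∀ w z, ℓ w z = r w z + ℓ₀ z) (hℓ₀ : Integrable ℓ₀ μ)
    (hrInt : Integrable (fun p : 𝒲 × 𝒵 => r p.1 p.2) ((P.map W).prod μ))
    (hrZ : ∀ i, Integrable (fun ω => r (W ω) (Z i ω)) P) :
    ∫ ω, ((∫ z, ℓ (W ω) z ∂μ) - (n : ℝ)⁻¹ * ∑ i, ℓ (W ω) (Z i ω)) ∂P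
      = ∫ p, r p.1 p.2 ∂((P.map W).prod μ) - (n : ℝ)⁻¹ * ∑ i, ∫ ω, r (W ω) (Z i ω) ∂P := by
  have : IsProbabilityMeasure (P.map W) := Measure.isProbabilityMeasure_map hW.aemeasurable
  have hℓ₀Z : ∀ i, Integrable (fun ω => ℓ₀ (Z i ω)) P := fun i =>
    ((hZlaw i).symm ▸ hℓ₀ : Integrable ℓ₀ (P.map (Z i))).comp_measurable (hZ i)
  have hℓ₀Zint : ∀ i, ∫ ω, ℓ₀ (Z i ω) ∂P = ∫ z, ℓ₀ z ∂μ := fun i => by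
    rw [← hZlaw i, integral_map (hZ i).aemeasurable ((hZlaw i).symm ▸ hℓ₀.aestronglyMeasurable)]
  have hrW : Integrable (fun ω => ∫ z, r (W ω) z ∂μ) P :=
    hrInt.integral_prod_left.comp_measurable hW
  have hrMean : Integrable (fun ω => (n : ℝ)⁻¹ * ∑ i, r (W ω) (Z i ω)) P :=
    (integrable_finsetSum _ fun i _ => hrZ i).const_mul _
  have hℓ₀Mean : Integrable (fun ω => (n : ℝ)⁻¹ * ∑ i, ℓ₀ (Z i ω)) P :=
    (integrable_finsetSum _ fun i _ => hℓ₀Z i).const_mul _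
  have hrDev : Integrable
      (fun ω => (∫ z, r (W ω) z ∂μ) - (n : ℝ)⁻¹ * ∑ i, r (W ω) (Z i ω)) P :=
    hrW.sub hrMean
  have hℓ₀Dev : Integrable (fun ω => (∫ z, ℓ₀ z ∂μ) - (n : ℝ)⁻¹ * ∑ i, ℓ₀ (Z i ω)) P :=
    (integrable_const _).sub hℓ₀Mean
  have hsplit : ∀ᵐ ω ∂P, (∫ z, ℓ (W ω) z ∂μ) - (n : ℝ)⁻¹ * ∑ i, ℓ (W ω) (Z i ω)
      = ((∫ z, r (W ω) z ∂μ) - (n : ℝ)⁻¹ * ∑ i, r (W ω) (Z i ω))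
        + ((∫ z, ℓ₀ z ∂μ) - (n : ℝ)⁻¹ * ∑ i, ℓ₀ (Z i ω)) := by
    filter_upwards [ae_of_ae_map hW.aemeasurable hrInt.prod_right_ae] with ω hω
    simp only [hℓ, Finset.sum_add_distrib, integral_add hω hℓ₀]
    ring
  have hrpart : ∫ ω, ((∫ z, r (W ω) z ∂μ) - (n : ℝ)⁻¹ * ∑ i, r (W ω) (Z i ω)) ∂P
      = ∫ p, r p.1 p.2 ∂((P.map W).prod μ) - (n : ℝ)⁻¹ * ∑ i, ∫ ω, r (W ω) (Z i ω) ∂P := by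
    rw [integral_sub hrW hrMean,
      integral_const_mul, integral_finsetSum _ fun i _ => hrZ i, integral_prod _ hrInt,
      integral_map hW.aemeasurable hrInt.integral_prod_left.aestronglyMeasurable]
  have hℓ₀part : ∫ ω, ((∫ z, ℓ₀ z ∂μ) - (n : ℝ)⁻¹ * ∑ i, ℓ₀ (Z i ω)) ∂P = 0 := by
    rw [integral_sub (integrable_const _) hℓ₀Mean,
      integral_const_mul, integral_finsetSum _ fun i _ => hℓ₀Z i]
    simp [hℓ₀Zint, hn.ne']
  rw [integral_congr_ae hsplit, integral_add hrDev hℓ₀Dev, hrpart, hℓ₀part, add_zero]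

/-- Otherwise `∫ z, ℓ w z ∂μ` would be the junk value `0` for a.e. `w`, making the sample sum of
`ℓ₀ ∘ Z i` integrable, and by independence each of its terms. -/
lemma integrable_of_integrable_generalization_error [SFinite μ] (hn : 0 < n) (hW : Measurable W)
    (hZ : ∀ i, Measurable (Z i)) (hZlaw : ∀ i, P.map (Z i) = μ) (hind : iIndepFun Z P)
    (hℓ : ∀ w z, ℓ w z = r w z + ℓ₀ z) (hℓ₀ : Measurable ℓ₀)
    (hrInt : Integrable (fun p : 𝒲 × 𝒵 => r p.1 p.2) ((P.map W).prod μ))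
    (hgenInt : Integrable
      (fun ω => (∫ z, ℓ (W ω) z ∂μ) - (n : ℝ)⁻¹ * ∑ i, ℓ (W ω) (Z i ω)) P)
    (hEmpInt : Integrable (fun ω => (n : ℝ)⁻¹ * ∑ i, r (W ω) (Z i ω)) P) :
    Integrable ℓ₀ μ := by
  by_contra hℓ₀int
  have hzero : ∀ᵐ ω ∂P, ∫ z, ℓ (W ω) z ∂μ = 0 := by
    filter_upwards [ae_of_ae_map hW.aemeasurable hrInt.prod_right_ae] with ω hω
    refine integral_undef fun hℓW => hℓ₀int ((hℓW.sub hω).congr (ae_of_all _ fun z => ?_))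
    simp [hℓ]
  have hsum : Integrable (fun ω => ∑ i, ℓ₀ (Z i ω)) P := by
    refine ((hgenInt.add hEmpInt).const_mul (-n)).congr ?_
    filter_upwards [hzero] with ω hω
    simp only [Pi.add_apply, hω]
    simp only [hℓ, Finset.sum_add_distrib]
    field_simp
    ring
  have hfirst := (hind.comp (fun _ => ℓ₀) fun _ => hℓ₀).integrable_of_integrable_sum_s6
    (fun i => hℓ₀.comp (hZ i)) hsum ⟨0, hn⟩
  exact hℓ₀int (hZlaw ⟨0, hn⟩ ▸
    (integrable_map_measure hℓ₀.aestronglyMeasurable (hZ _).aemeasurable).mpr hfirst)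

end Learning

theorem eta_c_central_generalization_bound_general
    {Ω 𝒲 𝒵 : Type*} [MeasurableSpace Ω] [MeasurableSpace 𝒲] [MeasurableSpace 𝒵]
    (P : Measure Ω) [IsProbabilityMeasure P]
    (μ : Measure 𝒵) [IsProbabilityMeasure μ]
    (ℓ : 𝒲 → 𝒵 → ℝ) (hℓ : Measurable (Function.uncurry ℓ))
    (n : ℕ) (hn : 0 < n)
    (Z : Fin n → Ω → 𝒵) (hZmeas : ∀ i, Measurable (Z i))
    (hZlaw : ∀ i, P.map (Z i) = μ)
    (hindep : iIndepFun Z P)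
    (W : Ω → 𝒲) (hW : Measurable W)
    (wstar : 𝒲)
    (r : 𝒲 → 𝒵 → ℝ) (hr : r = fun w z => ℓ w z - ℓ wstar z)
    (η c : ℝ) (hη : 0 < η) (hc : 0 < c)
    -- all expectations appearing are finite
    (hrInt : Integrable (fun p : 𝒲 × 𝒵 => r p.1 p.2) ((P.map W).prod μ))
    (hexpInt : ∀ η' : ℝ, 0 < η' → η' ≤ η →
      Integrable (fun p : 𝒲 × 𝒵 => Real.exp (-η' * r p.1 p.2)) ((P.map W).prod μ))
    (hgenInt : Integrable
      (fun ω => (∫ z, ℓ (W ω) z ∂μ) - (n : ℝ)⁻¹ * ∑ i, ℓ (W ω) (Z i ω)) P)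
    (hEmpInt : Integrable (fun ω => (n : ℝ)⁻¹ * ∑ i, r (W ω) (Z i ω)) P)
    (hac : ∀ i, P.map (fun ω => (W ω, Z i ω)) ≪ (P.map W).prod μ)
    (hllr : ∀ i, Integrable (llr (P.map (fun ω => (W ω, Z i ω))) ((P.map W).prod μ))
        (P.map (fun ω => (W ω, Z i ω))))
    -- expected `(η, c)`-central condition
    (hcentral : Real.log (∫ p, Real.exp (-η * r p.1 p.2) ∂((P.map W).prod μ))
      ≤ -c * η * ∫ p, r p.1 p.2 ∂((P.map W).prod μ)) :
    ∀ η' : ℝ, 0 < η' → η' ≤ η →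
    ∫ ω, ((∫ z, ℓ (W ω) z ∂μ) - (n : ℝ)⁻¹ * ∑ i, ℓ (W ω) (Z i ω)) ∂P
      ≤ (1 - c) / c * (∫ ω, (n : ℝ)⁻¹ * ∑ i, r (W ω) (Z i ω) ∂P)
        + (1 / (c * η' * n)) * ∑ i,
            klDivR (P.map (fun ω => (W ω, Z i ω))) ((P.map W).prod μ) := by
  intro η' hη' hη'η
  have : IsProbabilityMeasure (P.map W) := Measure.isProbabilityMeasure_map hW.aemeasurable
  have hℓr : ∀ w z, ℓ w z = r w z + ℓ wstar z := by simp [hr]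
  have hℓ₀ : Measurable (ℓ wstar) := hℓ.comp measurable_prodMk_left
  have hrm : Measurable fun p : 𝒲 × 𝒵 => r p.1 p.2 := by
    subst hr
    exact hℓ.sub (hℓ₀.comp measurable_snd)
  have hpair : ∀ i, Measurable fun ω => (W ω, Z i ω) := fun i => hW.prodMk (hZmeas i)
  have hexp := hexpInt η hη le_rfl
  have hrZ : ∀ i, Integrable (fun ω => r (W ω) (Z i ω)) P :=
    integrable_of_integrable_sum_of_integrable_max_neg
      (fun i => (hrm.comp (hpair i)).aestronglyMeasurable)
      ((integrable_const_mul_iff (isUnit_iff_ne_zero.mpr (by positivity)) _).mp hEmpInt)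
      (fun i => integrable_max_neg_comp_of_integrable_exp (hpair i) (hac i) (hllr i) hrm hη hexp)
  rw [integral_generalization_error_eq hn hW hZmeas hZlaw hℓr
    (integrable_of_integrable_generalization_error hn hW hZmeas hZlaw hindep hℓr hℓ₀ hrInt
      hgenInt hEmpInt) hrInt hrZ, integral_const_mul, integral_finsetSum _ fun i _ => hrZ i]
  refine sub_average_le_of_forall_le_s6 hn hη' hη'η hc (fun i => ?_) fun i =>
    mul_integral_le_integral_comp_add_klDivR (hpair i) (hac i) (hllr i) hrm (hrZ i) hexp hcentral
  have : IsProbabilityMeasure (P.map fun ω => (W ω, Z i ω)) :=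
    Measure.isProbabilityMeasure_map (hpair i).aemeasurable
  exact klDivR_nonneg (hac i) (hllr i)

/-- **Theorem 4 (fast rate with the `(η, c)`-central condition, generalization error).** -/
theorem eta_c_central_generalization_bound
    {Ω 𝒲 𝒵 : Type*} [MeasurableSpace Ω] [MeasurableSpace 𝒲] [MeasurableSpace 𝒵]
    (P : Measure Ω) [IsProbabilityMeasure P]
    (μ : Measure 𝒵) [IsProbabilityMeasure μ]
    (ℓ : 𝒲 → 𝒵 → ℝ) (hℓ : Measurable (Function.uncurry ℓ))
    (n : ℕ) (hn : 0 < n)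
    (Z : Fin n → Ω → 𝒵) (hZmeas : ∀ i, Measurable (Z i))
    (hZlaw : ∀ i, P.map (Z i) = μ)
    (hindep : iIndepFun Z P)
    (W : Ω → 𝒲) (hW : Measurable W)
    (wstar : 𝒲) (hwstar : ∀ w, ∫ z, ℓ wstar z ∂μ ≤ ∫ z, ℓ w z ∂μ)
    (r : 𝒲 → 𝒵 → ℝ) (hr : r = fun w z => ℓ w z - ℓ wstar z)
    (η c : ℝ) (hη : 0 < η) (hc : 0 < c) (hc1 : c ≤ 1)
    -- all expectations appearing are finite
    (hrInt : Integrable (fun p : 𝒲 × 𝒵 => r p.1 p.2) ((P.map W).prod μ))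
    (hexpInt : ∀ η' : ℝ, 0 < η' → η' ≤ η →
      Integrable (fun p : 𝒲 × 𝒵 => Real.exp (-η' * r p.1 p.2)) ((P.map W).prod μ))
    (hgenInt : Integrable
      (fun ω => (∫ z, ℓ (W ω) z ∂μ) - (n : ℝ)⁻¹ * ∑ i, ℓ (W ω) (Z i ω)) P)
    (hEmpInt : Integrable (fun ω => (n : ℝ)⁻¹ * ∑ i, r (W ω) (Z i ω)) P)
    (hac : ∀ i, P.map (fun ω => (W ω, Z i ω)) ≪ (P.map W).prod μ)
    (hllr : ∀ i, Integrable (llr (P.map (fun ω => (W ω, Z i ω))) ((P.map W).prod μ))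
        (P.map (fun ω => (W ω, Z i ω))))
    -- expected `(η, c)`-central condition
    (hcentral : Real.log (∫ p, Real.exp (-η * r p.1 p.2) ∂((P.map W).prod μ))
      ≤ -c * η * ∫ p, r p.1 p.2 ∂((P.map W).prod μ)) :
    ∀ η' : ℝ, 0 < η' → η' ≤ η →
    ∫ ω, ((∫ z, ℓ (W ω) z ∂μ) - (n : ℝ)⁻¹ * ∑ i, ℓ (W ω) (Z i ω)) ∂P
      ≤ (1 - c) / c * (∫ ω, (n : ℝ)⁻¹ * ∑ i, r (W ω) (Z i ω) ∂P)
        + (1 / (c * η' * n)) * ∑ i,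
            klDivR (P.map (fun ω => (W ω, Z i ω))) ((P.map W).prod μ) :=
  eta_c_central_generalization_bound_general P μ ℓ hℓ n hn Z hZmeas hZlaw hindep W hW wstar r hr η c
    hη hc hrInt hexpInt hgenInt hEmpInt hac hllr hcentral
end
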